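/- (Gröbner bases for coloured Petri nets, folded form) Let N_C = (X, T, C, F, w) be a coloured Petri net with a finite set C of colours that is reversible, let M₀ be an initial marking, and define P := {pol(t) : t ∈ T} ⊆ ℚ[X × C], where for a coloured marking M the associated polynomial is pol(M) := ∏_{(x,c) ∈ X×C} (x,c)^{M(x)(c)} and for a transition t it is pol(t) := ∏_{(x,c)} (x,c)^{w(x,t)(c)} − ∏_{(x,c)} (x,c)^{w(t,x)(c)}. Then a coloured marking M is reachable from M₀ in N_C if and only if pol(M₀) − pol(M) lies in the ideal of ℚ[X × C] generated by P. -/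

import Mathlib

/-!
Unfolding the colours, a coloured net is an ordinary net on the places `X × C`, and `pol` is
the monomial map `ℕ^(X × C) → ℚ[X × C]`. Firing `t` at `M` replaces the factor `l_t` of
`pol(M)` by `r_t`, so `pol(M) - pol(M')` is a multiple of `pol(t)`.

Conversely, a firing stays possible in the presence of extra tokens, so in a reversible net
reachability is a congruence `~` on the additive monoid of markings. The ring map
`ℚ[X × C] = ℚ[ℕ^(X × C)] → ℚ[ℕ^(X × C)/~]` kills every `pol(t)`, hence the whole ideal; if
`pol(M₀) - pol(M)` lies in it, then `M₀` and `M` have the same image in `ℕ^(X × C)/~`.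
-/

open MvPolynomial Finset

/-- A Petri net on a set `X` of places and a set `T` of transitions.
`pre x t` is the weight `w(x,t)` of the edge from place `x` to transition `t`,
and `post t x` is the weight `w(t,x)` (weights are `0` off the flow relation). -/
structure PetriNet (X T : Type*) where
  pre : X → T → ℕ
  post : T → X → ℕ

/-- A transition `t` is enabled at a marking `M` if every place `x` holds
at least `w(x,t)` tokens. -/
def PetriNet.enabled {X T : Type*} (N : PetriNet X T) (t : T) (M : X → ℕ) : Prop :=
  ∀ x, N.pre x t ≤ M x

/-- Firing transition `t` at marking `M` removes `w(x,t)` tokens from each place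
and adds `w(t,x)` tokens to each place. -/
def PetriNet.fire {X T : Type*} (N : PetriNet X T) (t : T) (M : X → ℕ) : X → ℕ :=
  fun x => M x - N.pre x t + N.post t x

/-- `M'` is reachable from `M` if some finite sequence of firings of enabled
transitions transforms `M` into `M'`. -/
def PetriNet.Reachable {X T : Type*} (N : PetriNet X T) : (X → ℕ) → (X → ℕ) → Prop :=
  Relation.ReflTransGen (fun M M' => ∃ t, N.enabled t M ∧ M' = N.fire t M)

/-- The polynomial `pol(M) = ∏ x^(M x)` associated to a marking. -/
noncomputable def polM {X : Type*} [Fintype X] (M : X → ℕ) : MvPolynomial X ℚ :=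
  ∏ x, (MvPolynomial.X x : MvPolynomial X ℚ) ^ M x

/-- The monomial `l_t = ∏ x^(w(x,t))` of the inputs of a transition. -/
noncomputable def polIn {X T : Type*} [Fintype X] (N : PetriNet X T) (t : T) :
    MvPolynomial X ℚ :=
  ∏ x, (MvPolynomial.X x : MvPolynomial X ℚ) ^ N.pre x t

/-- The monomial `r_t = ∏ x^(w(t,x))` of the outputs of a transition. -/
noncomputable def polOut {X T : Type*} [Fintype X] (N : PetriNet X T) (t : T) :
    MvPolynomial X ℚ :=
  ∏ x, (MvPolynomial.X x : MvPolynomial X ℚ) ^ N.post t x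

/-- The polynomial `pol(t) = l_t - r_t` associated to a transition. -/
noncomputable def polT {X T : Type*} [Fintype X] (N : PetriNet X T) (t : T) :
    MvPolynomial X ℚ :=
  polIn N t - polOut N t
/-- A coloured Petri net: `pre x t c` is the multiplicity `w(x,t)(c)` of colour
`c` in the power product of colours labelling the edge from place `x` to
transition `t`, and `post t x c` is `w(t,x)(c)` (empty off the flow relation). -/
structure ColouredPetriNet (X T C : Type*) where
  pre : X → T → C → ℕ
  post : T → X → C → ℕ

/-- A transition `t` is enabled at a coloured marking `M` if for every place `x`
the power product `M x` is a multiple of `w(x,t)`. -/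
def ColouredPetriNet.enabled {X T C : Type*} (N : ColouredPetriNet X T C)
    (t : T) (M : X → C → ℕ) : Prop :=
  ∀ x c, N.pre x t c ≤ M x c

/-- Firing transition `t` at coloured marking `M` deletes `w(x,t)` from each
place and appends `w(t,x)`. -/
def ColouredPetriNet.fire {X T C : Type*} (N : ColouredPetriNet X T C)
    (t : T) (M : X → C → ℕ) : X → C → ℕ :=
  fun x c => M x c - N.pre x t c + N.post t x c

/-- Coloured reachability: a finite sequence of firings transforms `M` into `M'`. -/
def ColouredPetriNet.Reachable {X T C : Type*} (N : ColouredPetriNet X T C) :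
    (X → C → ℕ) → (X → C → ℕ) → Prop :=
  Relation.ReflTransGen (fun M M' => ∃ t, N.enabled t M ∧ M' = N.fire t M)

/-- `pol(M) = ∏_{(x,c)} (x,c)^(M x c)` in `ℚ[X × C]` for a coloured marking. -/
noncomputable def polCM {X C : Type*} [Fintype X] [Fintype C] (M : X → C → ℕ) :
    MvPolynomial (X × C) ℚ :=
  ∏ p : X × C, (MvPolynomial.X p : MvPolynomial (X × C) ℚ) ^ M p.1 p.2

/-- `pol(t) = ∏_{(x,c)} (x,c)^(w(x,t)(c)) - ∏_{(x,c)} (x,c)^(w(t,x)(c))`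
in `ℚ[X × C]` for a transition of a coloured Petri net. -/
noncomputable def polCT {X T C : Type*} [Fintype X] [Fintype C]
    (N : ColouredPetriNet X T C) (t : T) : MvPolynomial (X × C) ℚ :=
  (∏ p : X × C, (MvPolynomial.X p : MvPolynomial (X × C) ℚ) ^ N.pre p.1 t p.2) -
  (∏ p : X × C, (MvPolynomial.X p : MvPolynomial (X × C) ℚ) ^ N.post t p.1 p.2)

namespace PetriNet

variable {X T : Type*} {N : PetriNet X T}

theorem fire_add (N : PetriNet X T) {t : T} {M : X → ℕ} (ht : N.enabled t M) (W : X → ℕ) :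
    N.fire t (M + W) = N.fire t M + W := by
  funext x
  have := ht x
  simp only [fire, Pi.add_apply]
  omega

theorem Reachable.add_right {M M' : X → ℕ} (h : N.Reachable M M') (W : X → ℕ) :
    N.Reachable (M + W) (M' + W) := by
  induction h with
  | refl => exact .refl
  | tail _ hstep ih =>
    obtain ⟨t, ht, rfl⟩ := hstep
    exact ih.tail ⟨t, fun x => (ht x).trans (Nat.le_add_right _ _), (N.fire_add ht W).symm⟩

theorem Reachable.add {M₁ M₁' M₂ M₂' : X → ℕ} (h₁ : N.Reachable M₁ M₁')
    (h₂ : N.Reachable M₂ M₂') : N.Reachable (M₁ + M₂) (M₁' + M₂') := by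
  have h₂' := h₂.add_right M₁'
  rw [add_comm M₂, add_comm M₂'] at h₂'
  exact (h₁.add_right M₂).trans h₂'

def reachableAddCon (N : PetriNet X T) (hrev : ∀ M M', N.Reachable M M' → N.Reachable M' M) :
    AddCon (X → ℕ) where
  r := N.Reachable
  iseqv := ⟨fun _ => .refl, hrev _ _, .trans⟩
  add' := Reachable.add

theorem reachable_pre_post (N : PetriNet X T) (t : T) : N.Reachable (N.pre · t) (N.post t) :=
  .single ⟨t, fun _ => le_rfl, by funext x; simp [fire]⟩

end PetriNet

section Binomial

variable {X : Type*} [Fintype X]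

theorem polM_eq_monomial (M : X → ℕ) :
    polM M = monomial (Finsupp.equivFunOnFinite.symm M) 1 := by
  rw [polM, prod_X_pow]
  congr
  ext x
  exact Finsupp.indicator_of_mem (mem_univ x) _

theorem polM_add (M W : X → ℕ) : polM (M + W) = polM M * polM W := by
  simp only [polM, Pi.add_apply, pow_add, prod_mul_distrib]

theorem AddCon.rel_of_polM_sub_mem_span {T : Type*} (c : AddCon (X → ℕ)) (A B : T → X → ℕ)
    (hAB : ∀ t, c (A t) (B t)) {M M' : X → ℕ}
    (hM : polM M - polM M' ∈ Ideal.span (Set.range fun t => polM (A t) - polM (B t))) :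
    c M M' := by
  let φ : MvPolynomial X ℚ →+* AddMonoidAlgebra ℚ c.Quotient :=
    AddMonoidAlgebra.mapDomainRingHom ℚ (c.mk'.comp Finsupp.coeFnAddHom)
  have φ_polM (M : X → ℕ) : φ (polM M) = AddMonoidAlgebra.single (M : c.Quotient) 1 := by
    rw [polM_eq_monomial, ← single_eq_monomial]
    exact AddMonoidAlgebra.mapDomain_single
  have hker : Ideal.span (Set.range fun t => polM (A t) - polM (B t)) ≤ RingHom.ker φ := by
    refine Ideal.span_le.mpr ?_
    rintro _ ⟨t, rfl⟩
    rw [SetLike.mem_coe, RingHom.mem_ker, map_sub, φ_polM, φ_polM, c.eq.mpr (hAB t), sub_self]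
  have h := RingHom.mem_ker.mp (hker hM)
  rw [map_sub, sub_eq_zero, φ_polM, φ_polM, AddMonoidAlgebra.single_left_inj one_ne_zero] at h
  exact c.eq.mp h

end Binomial

namespace PetriNet

variable {X T : Type*} [Fintype X] {N : PetriNet X T}

theorem polM_sub_polM_fire_mem {t : T} {M : X → ℕ} (ht : N.enabled t M) :
    polM M - polM (N.fire t M) ∈ Ideal.span (Set.range (polT N)) := by
  have hM : M = (M - (N.pre · t)) + (N.pre · t) := by
    funext x; have := ht x; simp only [Pi.add_apply, Pi.sub_apply]; omega
  have hfire : N.fire t M = (M - (N.pre · t)) + N.post t := rfl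
  rw [hfire, polM_add]
  nth_rw 1 [hM]
  rw [polM_add, ← mul_sub]
  exact Ideal.mul_mem_left _ _ (Ideal.subset_span ⟨t, rfl⟩)

theorem Reachable.polM_sub_mem {M₀ M : X → ℕ} (h : N.Reachable M₀ M) :
    polM M₀ - polM M ∈ Ideal.span (Set.range (polT N)) := by
  induction h with
  | refl => simp
  | @tail M M' _ hstep ih =>
    obtain ⟨t, ht, rfl⟩ := hstep
    rw [← sub_add_sub_cancel _ (polM M)]
    exact add_mem ih (polM_sub_polM_fire_mem ht)

theorem reachable_iff_polM_sub_mem (N : PetriNet X T)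
    (hrev : ∀ M M', N.Reachable M M' → N.Reachable M' M) (M₀ M : X → ℕ) :
    N.Reachable M₀ M ↔ polM M₀ - polM M ∈ Ideal.span (Set.range (polT N)) :=
  ⟨Reachable.polM_sub_mem,
    AddCon.rel_of_polM_sub_mem_span (N.reachableAddCon hrev) _ _ N.reachable_pre_post⟩

end PetriNet

namespace ColouredPetriNet

variable {X T C : Type*} (N : ColouredPetriNet X T C)

/-- The net on places `X × C` with the same transitions, whose markings are uncurried
coloured markings. -/
def unfold : PetriNet (X × C) T where
  pre p t := N.pre p.1 t p.2
  post t p := N.post t p.1 p.2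

theorem reachable_iff_unfold_reachable (M M' : X → C → ℕ) :
    N.Reachable M M' ↔ N.unfold.Reachable (Function.uncurry M) (Function.uncurry M') :=
  ⟨Relation.ReflTransGen.lift Function.uncurry
      (fun _ _ ⟨t, ht, h⟩ => ⟨t, fun p => ht p.1 p.2, by subst h; rfl⟩) _ _,
    Relation.ReflTransGen.lift Function.curry
      (fun _ _ ⟨t, ht, h⟩ => ⟨t, fun x c => ht (x, c), by subst h; rfl⟩) _ _⟩

end ColouredPetriNet

/-- Gröbner bases for coloured Petri nets, folded form: in a
reversible coloured Petri net with finitely many colours and initial marking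
`M₀`, a coloured marking `M` is reachable from `M₀` if and only if
`pol(M₀) - pol(M)` lies in the ideal of `ℚ[X × C]` generated by
`P = {pol(t) : t ∈ T}`. -/
theorem coloured_reachable_iff_polynomial_equiv {X T C : Type*}
    [Fintype X] [Fintype C] (N : ColouredPetriNet X T C)
    (hrev : ∀ M M' : X → C → ℕ, N.Reachable M M' → N.Reachable M' M)
    (M₀ M : X → C → ℕ) :
    N.Reachable M₀ M ↔ polCM M₀ - polCM M ∈ Ideal.span (Set.range (polCT N)) := by
  have hrev' : ∀ m m', N.unfold.Reachable m m' → N.unfold.Reachable m' m := fun m m' h =>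
    (N.reachable_iff_unfold_reachable (Function.curry m') (Function.curry m)).mp
      (hrev _ _ ((N.reachable_iff_unfold_reachable _ _).mpr h))
  -- `polCM` and `polCT N` are `polM` and `polT N.unfold` up to uncurrying, definitionally.
  exact (N.reachable_iff_unfold_reachable M₀ M).trans
    (N.unfold.reachable_iff_polM_sub_mem hrev' _ _)
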